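/- arXiv:2210.16588 — 7 statements merged into one kernel-verified Lean document; each statement's English description precedes it below -/
import Mathlib

section
/- Let $R$ be a commutative ring and suppose the monic polynomial $X^m + a_1 X^{m-1} + \cdots + a_m$ divides a monic polynomial $X^n + b_1 X^{n-1} + \cdots + b_n$ in $R[X]$. Then each coefficient $a_i$ is integral over the subring of $R$ generated by $b_1, \dots, b_n$. -/
open Polynomial

universe u

/-- Every monic polynomial splits into linear factors in some injective extension ring. -/
lemma exists_splits_monic (n : ℕ) :
    ∀ (R : Type u) [CommRing R], ∀ (g : R[X]), g.Monic → g.natDegree = n →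
    ∃ (S : Type u) (_ : CommRing S) (_ : Algebra R S),
      Function.Injective (algebraMap R S) ∧
      ∃ s : Multiset S, g.map (algebraMap R S) = (s.map fun a => X - C a).prod := by
  induction n with
  | zero =>
    intro R _ g hg hn
    refine ⟨R, inferInstance, Algebra.id R, fun a b h => h, 0, ?_⟩
    rw [hg.natDegree_eq_zero.mp hn]
    simp
  | succ n ih =>
    intro R _ g hg hn
    rcases subsingleton_or_nontrivial R with hR | hR
    · exact ⟨R, inferInstance, Algebra.id R, fun a b _ => Subsingleton.elim a b,
        Multiset.replicate (n+1) 0, Subsingleton.elim _ _⟩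
    letI T := AdjoinRoot g
    have hinj1 : Function.Injective (algebraMap R T) := by
      rw [injective_iff_map_eq_zero]
      intro r hr
      rw [AdjoinRoot.algebraMap_eq] at hr
      have hdvdc : g ∣ C r := AdjoinRoot.mk_eq_zero.mp hr
      have h1 : (C r) %ₘ g = 0 := (modByMonic_eq_zero_iff_dvd hg).mpr hdvdc
      have h2 : (C r) %ₘ g = C r := (modByMonic_eq_self_iff hg).mpr
        (lt_of_le_of_lt degree_C_le
          (by rw [degree_eq_natDegree hg.ne_zero, hn]; exact_mod_cast Nat.succ_pos n))
      have : C r = 0 := by rw [← h2, h1]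
      exact C_eq_zero.mp this
    haveI : Nontrivial T :=
      ⟨⟨0, 1, fun h => one_ne_zero (hinj1 (by simp [h.symm]))⟩⟩
    have hroot : IsRoot (g.map (AdjoinRoot.of g)) (AdjoinRoot.root g) := AdjoinRoot.isRoot_root g
    obtain ⟨g₁, hg₁⟩ := dvd_iff_isRoot.mpr hroot
    have hgmapmonic : (g.map (AdjoinRoot.of g)).Monic := by
      rw [← AdjoinRoot.algebraMap_eq]; exact hg.map _
    have hg₁monic : g₁.Monic := (monic_X_sub_C _).of_mul_monic_left (hg₁ ▸ hgmapmonic)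
    have hg₁deg : g₁.natDegree = n := by
      have hdeg : (g.map (AdjoinRoot.of g)).natDegree = n + 1 := by
        rw [← AdjoinRoot.algebraMap_eq, hg.natDegree_map, hn]
      rw [hg₁, (monic_X_sub_C _).natDegree_mul hg₁monic, natDegree_X_sub_C] at hdeg
      omega
    obtain ⟨S, _, _, hinj2, s, hs⟩ := ih T g₁ hg₁monic hg₁deg
    letI : Algebra R S := ((algebraMap T S).comp (algebraMap R T)).toAlgebra
    refine ⟨S, inferInstance, inferInstance, hinj2.comp hinj1,
      algebraMap T S (AdjoinRoot.root g) ::ₘ s, ?_⟩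
    have heq : algebraMap R S = (algebraMap T S).comp (algebraMap R T) := rfl
    rw [heq, ← Polynomial.map_map, AdjoinRoot.algebraMap_eq, hg₁, Polynomial.map_mul,
      Polynomial.map_sub, map_X, map_C, hs, Multiset.map_cons, Multiset.prod_cons]

/-- Kronecker's theorem (special case): if a monic polynomial `g` divides a
monic polynomial `f` in `R[X]`, then every coefficient of `g` is integral over
the subring of `R` generated by the coefficients of `f`. -/
theorem kronecker_monic_dvd_monic {R : Type*} [CommRing R] (g f : R[X])
    (hg : g.Monic) (hf : f.Monic) (hdvd : g ∣ f) (i : ℕ) :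
    IsIntegral (Algebra.adjoin ℤ {r : R | ∃ j, r = f.coeff j}) (g.coeff i) := by
  rcases subsingleton_or_nontrivial R with hR | hR
  · exact ⟨X, monic_X, Subsingleton.elim _ _⟩
  obtain ⟨S, _, _, hinj, s, hs⟩ := exists_splits_monic g.natDegree R g hg rfl
  haveI : Nontrivial S := ⟨⟨0, 1, fun h => one_ne_zero (hinj (by simp [h.symm]))⟩⟩
  set A := Algebra.adjoin ℤ {r : R | ∃ j, r = f.coeff j} with hA
  refine IsIntegral.tower_bot (A := R) (B := S) hinj ?_
  have hcoefA : ∀ j, f.coeff j ∈ A := fun j => Algebra.subset_adjoin ⟨j, rfl⟩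
  have hfr : (↑f.coeffs : Set R) ⊆ (A.toSubring : Set R) := by
    intro c hc
    obtain ⟨j, _, rfl⟩ := mem_coeffs_iff.mp (by exact_mod_cast hc)
    exact hcoefA j
  set p : (A.toSubring)[X] := f.toSubring A.toSubring hfr with hp
  have hpmonic : p.Monic := (monic_toSubring _ _ _).mpr hf
  have hsint : ∀ a ∈ s, IsIntegral A a := by
    intro a ha
    refine ⟨p, hpmonic, ?_⟩
    have hmap : p.map (A.toSubring.subtype) = f := map_toSubring _ _ _
    have hcompeq : (algebraMap R S).comp A.toSubring.subtype = algebraMap (↥A) S :=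
      RingHom.ext fun x => rfl
    show eval₂ (algebraMap (↥A) S) a p = 0
    have key : eval₂ (algebraMap (↥A) S) a p = eval a (f.map (algebraMap R S)) := by
      conv_rhs => rw [← hmap, Polynomial.map_map, hcompeq]
      rw [eval_map]
    rw [key]
    obtain ⟨h, rfl⟩ := hdvd
    rw [Polynomial.map_mul, eval_mul]
    have hroot : IsRoot (g.map (algebraMap R S)) a := by
      rw [hs]
      exact dvd_iff_isRoot.mp (Multiset.dvd_prod (Multiset.mem_map_of_mem _ ha))
    rw [hroot, zero_mul]
  have hcard : Multiset.card s = g.natDegree := by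
    have := congrArg natDegree hs
    rw [hg.natDegree_map, natDegree_multiset_prod_of_monic, Multiset.map_map] at this
    · simp only [Function.comp, natDegree_X_sub_C, Multiset.map_const', Multiset.sum_replicate,
        smul_eq_mul, mul_one] at this
      exact this.symm
    · exact Multiset.forall_mem_map_iff.2 fun a _ => monic_X_sub_C a
  by_cases hi : i ≤ g.natDegree
  · have hmem : algebraMap R S (g.coeff i) ∈ integralClosure A S := by
      rw [← coeff_map, hs, Multiset.prod_X_sub_C_coeff s (hcard ▸ hi)]
      refine mul_mem (pow_mem (neg_mem (one_mem _)) _) ?_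
      refine multiset_sum_mem _ fun x hx => ?_
      obtain ⟨t, ht, rfl⟩ := Multiset.mem_map.mp hx
      have ht' : t ≤ s := (Multiset.mem_powersetCard.mp ht).1
      exact multiset_prod_mem _ fun y hy => hsint y (Multiset.mem_of_le ht' hy)
    exact hmem
  · push_neg at hi
    rw [coeff_eq_zero_of_natDegree_lt hi, map_zero]
    exact isIntegral_zero
end

section
/- Let $R$ be an integrally closed integral domain with fraction field $K$, and let $P, Q \in R[X]$ with $P$ integral over the ideal $(Q)$ in $R[X]$, i.e., there is a relation $P^n + A_1 Q P^{n-1} + \cdots + A_n Q^n = 0$ with $A_i \in R[X]$. Then $P \in (Q)$ in $R[X]$. -/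
open Polynomial

lemma aux_rel {B : Type*} [CommRing B] (Q g : B) (n : ℕ) (A : ℕ → B) :
    (Q * g) ^ n + ∑ i ∈ Finset.range n, A i * Q ^ (i + 1) * (Q * g) ^ (n - 1 - i)
      = Q ^ n * (g ^ n + ∑ i ∈ Finset.range n, A i * g ^ (n - 1 - i)) := by
  rw [mul_add, Finset.mul_sum, mul_pow]
  congr 1
  refine Finset.sum_congr rfl fun i hi => ?_
  have hi' : i < n := Finset.mem_range.mp hi
  have hQn : Q ^ n = Q ^ (i + 1) * Q ^ (n - 1 - i) := by
    rw [← pow_add]; congr 1; omega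
  rw [mul_pow, hQn]; ring

lemma aux_dvd {B : Type*} [CommRing B] [IsDomain B] [IsIntegrallyClosed B]
    (P Q : B) (n : ℕ) (hn : 0 < n) (A : ℕ → B)
    (hint : P ^ n + ∑ i ∈ Finset.range n, A i * Q ^ (i + 1) * P ^ (n - 1 - i) = 0) :
    Q ∣ P := by
  by_cases hQ : Q = 0
  · subst hQ
    have hP : P ^ n = 0 := by
      simpa [zero_pow] using hint
    have : P = 0 := pow_eq_zero_iff hn.ne' |>.mp hP
    simp [this]
  · set L := FractionRing B
    set ψ := algebraMap B L with hψ
    have hψinj : Function.Injective ψ := IsFractionRing.injective B L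
    have hψQ : ψ Q ≠ 0 := fun h => hQ (hψinj (by simpa using h))
    set s : L := ψ P / ψ Q with hs
    have hPQs : ψ P = ψ Q * s := by
      rw [hs, mul_div_cancel₀ _ hψQ]
    have hintL : ψ P ^ n + ∑ i ∈ Finset.range n, ψ (A i) * ψ Q ^ (i + 1) * ψ P ^ (n - 1 - i) = 0 := by
      have := congrArg ψ hint
      simpa [map_add, map_mul, map_pow, map_sum] using this
    rw [hPQs, aux_rel] at hintL
    have hrel : s ^ n + ∑ i ∈ Finset.range n, ψ (A i) * s ^ (n - 1 - i) = 0 :=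
      (mul_eq_zero.mp hintL).resolve_left (pow_ne_zero n hψQ)
    have hsInt : IsIntegral B s := by
      refine ⟨X ^ n + ∑ i ∈ Finset.range n, C (A i) * X ^ (n - 1 - i), ?_, ?_⟩
      · apply monic_X_pow_add
        refine lt_of_le_of_lt (Polynomial.degree_sum_le _ _) ?_
        rw [Finset.sup_lt_iff (by exact_mod_cast WithBot.bot_lt_coe n)]
        intro i hi
        refine lt_of_le_of_lt (degree_mul_le _ _) ?_
        calc degree (C (A i)) + degree ((X : B[X]) ^ (n - 1 - i))
            ≤ 0 + (n - 1 - i : ℕ) := add_le_add degree_C_le (degree_X_pow_le _)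
          _ < (n : WithBot ℕ) := by
              rw [zero_add]
              exact_mod_cast (by omega : n - 1 - i < n)
      · simp only [eval₂_add, eval₂_pow, eval₂_X, eval₂_finset_sum, eval₂_mul, eval₂_C]
        exact hrel
    obtain ⟨y, hy⟩ := IsIntegrallyClosed.isIntegral_iff.mp hsInt
    exact ⟨y, hψinj (by rw [map_mul, hψ, hy, ← hψ, hPQs])⟩

theorem integral_over_principal_mem_of_integrally_closed {R : Type*} [CommRing R]
    [IsDomain R] [IsIntegrallyClosed R] (P Q : R[X]) (n : ℕ) (hn : 0 < n)
    (A : ℕ → R[X])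
    (hint : P ^ n + ∑ i ∈ Finset.range n,
        A i * Q ^ (i + 1) * P ^ (n - 1 - i) = 0) :
    P ∈ Ideal.span ({Q} : Set R[X]) := by
  rw [Ideal.mem_span_singleton]
  by_cases hQ : Q = 0
  · subst hQ
    have hP : P ^ n = 0 := by simpa [zero_pow] using hint
    have : P = 0 := pow_eq_zero_iff hn.ne' |>.mp hP
    simp [this]
  set K := FractionRing R
  set φ := algebraMap R K with hφ
  have hφinj : Function.Injective φ := IsFractionRing.injective R K
  have hminj : Function.Injective (Polynomial.map φ) := Polynomial.map_injective φ hφinj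
  have hintK : (P.map φ) ^ n + ∑ i ∈ Finset.range n,
      (A i).map φ * (Q.map φ) ^ (i + 1) * (P.map φ) ^ (n - 1 - i) = 0 := by
    have := congrArg (mapRingHom φ) hint
    simpa [map_add, map_mul, map_pow, map_sum, coe_mapRingHom] using this
  obtain ⟨g, hg⟩ := aux_dvd (P.map φ) (Q.map φ) n hn (fun i => (A i).map φ) hintK
  have hQK : Q.map φ ≠ 0 := fun h => hQ (hminj (by simpa using h))
  have hrel : g ^ n + ∑ i ∈ Finset.range n, (A i).map φ * g ^ (n - 1 - i) = 0 := by
    rw [hg, aux_rel] at hintK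
    exact (mul_eq_zero.mp hintK).resolve_left (pow_ne_zero n hQK)
  set N := ((Finset.range n).sup fun i => (A i).natDegree) + g.natDegree + 1 with hN
  set h : R[X] := X ^ (N * n) + ∑ i ∈ Finset.range n, A i * X ^ (N * (n - 1 - i)) with hh
  have hhmonic : h.Monic := by
    apply monic_X_pow_add
    refine lt_of_le_of_lt (degree_sum_le _ _) ?_
    rw [Finset.sup_lt_iff (by exact_mod_cast WithBot.bot_lt_coe (N * n))]
    intro i hi
    refine lt_of_le_of_lt (degree_mul_le _ _) ?_
    have h1 : (A i).natDegree < N := lt_of_le_of_lt (Finset.le_sup (f := fun i => (A i).natDegree) hi) (by omega)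
    have h2 : N * (n - 1 - i) ≤ N * (n - 1) := Nat.mul_le_mul_left _ (by omega)
    have h3 : N * (n - 1) + N = N * n := by
      rw [← Nat.mul_succ]; congr 1; omega
    calc degree (A i) + degree ((X : R[X]) ^ (N * (n - 1 - i)))
        ≤ ((A i).natDegree : WithBot ℕ) + ((N * (n - 1 - i) : ℕ) : WithBot ℕ) :=
          add_le_add degree_le_natDegree (degree_X_pow_le _)
      _ = (((A i).natDegree + N * (n - 1 - i) : ℕ) : WithBot ℕ) := by push_cast; rfl
      _ < ((N * n : ℕ) : WithBot ℕ) := by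
          exact_mod_cast (show (A i).natDegree + N * (n - 1 - i) < N * n by omega)
  set q : (K[X])[X] := X ^ n + ∑ i ∈ Finset.range n, C ((A i).map φ) * X ^ (n - 1 - i) with hq
  have he1 : q.eval g = 0 := by
    simp only [hq, eval_add, eval_pow, eval_X, eval_finset_sum, eval_mul, eval_C]
    exact hrel
  have he2 : q.eval ((X : K[X]) ^ N) = h.map φ := by
    have := congrArg (mapRingHom φ) hh
    simp only [map_add, map_pow, map_sum, map_mul, coe_mapRingHom, Polynomial.map_X] at this
    rw [this]
    simp only [hq, eval_add, eval_pow, eval_X, eval_finset_sum, eval_mul, eval_C, ← pow_mul]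
  have hdvd : ((X : K[X]) ^ N - g) ∣ h.map φ := by
    have hd := sub_dvd_eval_sub ((X : K[X]) ^ N) g q
    rwa [he1, he2, sub_zero] at hd
  have hmon : ((X : K[X]) ^ N - g).Monic :=
    monic_X_pow_sub (lt_of_le_of_lt degree_le_natDegree (by exact_mod_cast (by omega : g.natDegree < N)))
  obtain ⟨g', hg'⟩ := IsIntegrallyClosed.eq_map_mul_C_of_dvd K hhmonic hdvd
  rw [hmon.leadingCoeff, C_1, mul_one] at hg'
  refine ⟨X ^ N - g', hminj ?_⟩
  rw [Polynomial.map_mul, Polynomial.map_sub, Polynomial.map_pow, Polynomial.map_X, hg', hg]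
  ring
end

section
/- Let $R$ be a normal commutative ring without zero divisors, $a \in R$, and $P, Q \in R[X]$. Suppose $P$ is integral over the ideal $(Q)$ in $R[X]$, and $P \in (Q)$ in $R[1/a][X]$. Then $a = 0$ or $P \in (Q)$ in $R[X]$. -/
open Polynomial

/-- A commutative ring is *normal* if every element integral over a principal
ideal `(a)` belongs to `(a)`. -/
def IsNormalRing (R : Type*) [CommRing R] : Prop :=
  ∀ b a : R,
    (∃ n : ℕ, 0 < n ∧ ∃ u : ℕ → R,
      b ^ n + ∑ i ∈ Finset.range n, u i * a ^ (i + 1) * b ^ (n - 1 - i) = 0) →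
    b ∈ Ideal.span {a}

theorem isIntegrallyClosed_of_isNormalRing {R : Type*} [CommRing R] [IsDomain R]
    (hR : IsNormalRing R) : IsIntegrallyClosed R := by
  rw [isIntegrallyClosed_iff (FractionRing R)]
  intro x hx
  obtain ⟨p, pmonic, hp⟩ := hx
  obtain ⟨⟨b, c⟩, hbc⟩ := IsLocalization.surj (nonZeroDivisors R) x
  simp only at hbc
  let f : R →+* FractionRing R := algebraMap R (FractionRing R)
  have hn0 : 0 < p.natDegree := by
    rcases Nat.eq_zero_or_pos p.natDegree with h | h
    · exfalso
      have h1 : p = 1 := pmonic.natDegree_eq_zero.mp h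
      rw [h1] at hp; simp at hp
    · exact h
  set n := p.natDegree with hn
  have hcK : f c ≠ 0 :=
    IsFractionRing.to_map_ne_zero_of_mem_nonZeroDivisors c.2
  have hb : f b = x * f c := hbc.symm
  set F : ℕ → FractionRing R := fun j => f (p.coeff j) * x ^ j with hF
  have key : b ^ n + ∑ i ∈ Finset.range n,
      p.coeff (n - 1 - i) * (c : R) ^ (i + 1) * b ^ (n - 1 - i) = 0 := by
    apply IsFractionRing.injective R (FractionRing R)
    rw [map_zero, map_add, map_pow, map_sum]
    have e1 : ∀ i ∈ Finset.range n,
        f (p.coeff (n - 1 - i) * (c : R) ^ (i + 1) * b ^ (n - 1 - i))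
          = F (n - 1 - i) * f c ^ n := by
      intro i hi
      rw [Finset.mem_range] at hi
      rw [map_mul, map_mul, map_pow, map_pow, hb, mul_pow, hF]
      have hpow : f c ^ (i + 1) * f c ^ (n - 1 - i) = f c ^ n := by
        rw [← pow_add]; congr 1; omega
      calc f (p.coeff (n - 1 - i)) * f ↑c ^ (i + 1) * (x ^ (n - 1 - i) * f ↑c ^ (n - 1 - i))
          = f (p.coeff (n - 1 - i)) * x ^ (n - 1 - i) * (f ↑c ^ (i + 1) * f ↑c ^ (n - 1 - i)) := by
            ring
        _ = f (p.coeff (n - 1 - i)) * x ^ (n - 1 - i) * f ↑c ^ n := by rw [hpow]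
    rw [Finset.sum_congr rfl e1, hb, mul_pow, ← Finset.sum_mul]
    have e3 : ∑ i ∈ Finset.range n, F (n - 1 - i) = ∑ i ∈ Finset.range n, F i :=
      Finset.sum_range_reflect F n
    have e4 : (aeval x) p = ∑ i ∈ Finset.range (n + 1), F i := by
      rw [aeval_eq_sum_range]
      exact Finset.sum_congr rfl fun i _ => by rw [Algebra.smul_def]
    have e5 : F n = x ^ n := by
      show f (p.coeff p.natDegree) * x ^ p.natDegree = x ^ p.natDegree
      rw [pmonic.coeff_natDegree, map_one, one_mul]
    have hp' : (aeval x) p = 0 := hp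
    calc x ^ n * f ↑c ^ n + (∑ i ∈ Finset.range n, F (n - 1 - i)) * f ↑c ^ n
        = (∑ i ∈ Finset.range (n + 1), F i) * f ↑c ^ n := by
          rw [e3, Finset.sum_range_succ, e5]; ring
      _ = 0 := by rw [← e4, hp', zero_mul]
  obtain ⟨d, hd⟩ := Ideal.mem_span_singleton'.mp
    (hR b c ⟨n, hn0, fun i => p.coeff (n - 1 - i), key⟩)
  refine ⟨d, ?_⟩
  have hfin : f d * f c = x * f c := by
    rw [← map_mul, hd, hbc]
  exact mul_right_cancel₀ hcK hfin

theorem mem_span_or_eq_zero_of_mem_span_localization {R : Type*} [CommRing R]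
    (hR : IsNormalRing R) (hzd : ∀ x y : R, x * y = 0 → x = 0 ∨ y = 0)
    (a : R) (P Q : R[X])
    (hint : ∃ n : ℕ, 0 < n ∧ ∃ A : ℕ → R[X],
      P ^ n + ∑ i ∈ Finset.range n, A i * Q ^ (i + 1) * P ^ (n - 1 - i) = 0)
    (hloc : P.map (algebraMap R (Localization.Away a)) ∈
      Ideal.span ({Q.map (algebraMap R (Localization.Away a))} :
        Set (Polynomial (Localization.Away a)))) :
    a = 0 ∨ P ∈ Ideal.span ({Q} : Set R[X]) := by
  by_cases ha : a = 0
  · exact Or.inl ha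
  right
  have hnt : Nontrivial R := by
    by_contra h
    rw [not_nontrivial_iff_subsingleton] at h
    exact ha (Subsingleton.elim a 0)
  haveI : NoZeroDivisors R := ⟨fun {x y} h => hzd x y h⟩
  haveI : IsDomain R := NoZeroDivisors.to_isDomain R
  haveI : IsIntegrallyClosed R := isIntegrallyClosed_of_isNormalRing hR
  obtain ⟨n, hn, A, hA⟩ := hint
  by_cases hQ : Q = 0
  · subst hQ
    have hPn : P ^ n = 0 := by
      simpa [zero_pow (Nat.succ_ne_zero _)] using hA
    have hP0 : P = 0 := pow_eq_zero_iff hn.ne' |>.mp hPn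
    rw [hP0]
    exact Ideal.zero_mem _
  by_cases hP : P = 0
  · rw [hP]; exact Ideal.zero_mem _
  -- Set up the fraction field
  set K := FractionRing R with hK
  have finj : Function.Injective (algebraMap R K) := IsFractionRing.injective R K
  have pinj : Function.Injective (Polynomial.map (algebraMap R K)) :=
    Polynomial.map_injective _ finj
  -- the unit
  have haK : IsUnit (algebraMap R K a) := by
    rw [isUnit_iff_ne_zero]
    exact IsFractionRing.to_map_ne_zero_of_mem_nonZeroDivisors
      (mem_nonZeroDivisors_of_ne_zero ha)
  set ψ : Localization.Away a →+* K := IsLocalization.Away.lift a haK with hψ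
  have hcomp : ψ.comp (algebraMap R (Localization.Away a)) = algebraMap R K :=
    IsLocalization.Away.lift_comp a haK
  obtain ⟨S', hS'⟩ := Ideal.mem_span_singleton'.mp hloc
  -- hS' : S' * Q.map loc = P.map loc
  set PK : K[X] := P.map (algebraMap R K) with hPK
  set QK : K[X] := Q.map (algebraMap R K) with hQK
  set SK : K[X] := S'.map ψ with hSK
  have hPQ : PK = QK * SK := by
    have := congrArg (Polynomial.map ψ) hS'
    rw [Polynomial.map_mul, Polynomial.map_map, Polynomial.map_map, hcomp] at this
    rw [hPK, hQK, hSK, ← this, mul_comm]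
  have hPKne : PK ≠ 0 := fun h => hP (pinj (by simpa [hPK] using h))
  have hQKne : QK ≠ 0 := fun h => hQ (pinj (by simpa [hQK] using h))
  have hSKne : SK ≠ 0 := fun h => hPKne (by rw [hPQ, h, mul_zero])
  -- degree bound for SK
  have hdegS : SK.natDegree ≤ P.natDegree := by
    have h1 : PK.natDegree = QK.natDegree + SK.natDegree := by
      rw [hPQ]; exact natDegree_mul hQKne hSKne
    have h2 : PK.natDegree = P.natDegree := natDegree_map_eq_of_injective finj P
    omega
  set d : ℕ := P.natDegree + (Finset.range n).sup (fun i => (A i).natDegree) with hd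
  set m : ℕ := d + 1 with hm
  have hdegA : ∀ i ∈ Finset.range n, (A i).natDegree ≤ d := by
    intro i hi
    rw [hd]
    exact le_trans (Finset.le_sup (f := fun i => (A i).natDegree) hi) (Nat.le_add_left _ _)
  -- g = X^m - SK is monic
  have hgmonic : Monic (X ^ m - SK) := by
    apply monic_X_pow_sub
    calc SK.degree ≤ (SK.natDegree : WithBot ℕ) := degree_le_natDegree
      _ ≤ (d : WithBot ℕ) := by
          exact_mod_cast le_trans hdegS (Nat.le_add_right _ _)
      _ < (m : WithBot ℕ) := by exact_mod_cast Nat.lt_succ_self d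
  -- b0
  set b0 : R[X] := X ^ (m * n) + ∑ i ∈ Finset.range n, A i * X ^ (m * (n - 1 - i)) with hb0
  have hb0monic : Monic b0 := by
    apply monic_X_pow_add
    apply lt_of_le_of_lt (degree_sum_le _ _)
    refine (Finset.sup_lt_iff (WithBot.bot_lt_coe (m * n))).mpr ?_
    intro i hi
    rcases eq_or_ne (A i) 0 with h0 | h0
    · simp only [h0, zero_mul, degree_zero]
      exact WithBot.bot_lt_coe _
    calc (A i * X ^ (m * (n - 1 - i))).degree
        ≤ (A i).degree + (X ^ (m * (n - 1 - i)) : R[X]).degree := degree_mul_le _ _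
      _ ≤ ((A i).natDegree : WithBot ℕ) + (m * (n - 1 - i) : ℕ) := by
          rw [degree_X_pow]
          exact add_le_add degree_le_natDegree le_rfl
      _ = (((A i).natDegree + m * (n - 1 - i) : ℕ) : WithBot ℕ) := by
          push_cast; ring
      _ < ((m * n : ℕ) : WithBot ℕ) := by
          rw [Nat.cast_lt]
          have h1 : (A i).natDegree ≤ d := hdegA i hi
          have h2 : n - 1 - i ≤ n - 1 := by omega
          have h3 : m * (n - 1 - i) ≤ m * (n - 1) := Nat.mul_le_mul_left m h2
          have h4 : m * (n - 1) + m = m * n := by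
            cases n with
            | zero => omega
            | succ k => simp [Nat.succ_sub_one, Nat.mul_succ]
          omega
  -- F_K
  set FK : Polynomial K[X] :=
    X ^ n + ∑ i ∈ Finset.range n, C ((A i).map (algebraMap R K)) * X ^ (n - 1 - i) with hFK
  -- root equation for SK
  have hrootQ : QK ^ n * (SK ^ n + ∑ i ∈ Finset.range n,
      (A i).map (algebraMap R K) * SK ^ (n - 1 - i)) = 0 := by
    have h0 : PK ^ n + ∑ i ∈ Finset.range n,
        (A i).map (algebraMap R K) * QK ^ (i + 1) * PK ^ (n - 1 - i) = 0 := by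
      have := congrArg (Polynomial.map (algebraMap R K)) hA
      simpa [Polynomial.map_add, Polynomial.map_pow, Polynomial.map_mul,
        Polynomial.map_sum, hPK, hQK] using this
    rw [← h0, mul_add, Finset.mul_sum]
    congr 1
    · rw [hPQ]; ring
    refine Finset.sum_congr rfl fun i hi => ?_
    rw [Finset.mem_range] at hi
    have hq : QK ^ n = QK ^ (i + 1) * QK ^ (n - 1 - i) := by
      rw [← pow_add]; congr 1; omega
    rw [hPQ, hq, mul_pow]; ring
  have hroot : SK ^ n + ∑ i ∈ Finset.range n,
      (A i).map (algebraMap R K) * SK ^ (n - 1 - i) = 0 := by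
    rcases mul_eq_zero.mp hrootQ with h | h
    · exact absurd h (pow_ne_zero n hQKne)
    · exact h
  have hevalS : FK.eval SK = 0 := by
    rw [hFK]
    simp only [eval_add, eval_pow, eval_X, eval_finset_sum, eval_mul, eval_C]
    exact hroot
  have hevalX : FK.eval (X ^ m) = b0.map (algebraMap R K) := by
    rw [hFK, hb0]
    simp only [eval_add, eval_pow, eval_X, eval_finset_sum, eval_mul, eval_C,
      Polynomial.map_add, Polynomial.map_pow, Polynomial.map_sum, Polynomial.map_mul,
      Polynomial.map_X, ← pow_mul]
  have hdvd : (X ^ m - SK) ∣ b0.map (algebraMap R K) := by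
    have := sub_dvd_eval_sub (X ^ m) SK FK
    rw [hevalS, hevalX, sub_zero] at this
    exact this
  obtain ⟨g', hg'⟩ := IsIntegrallyClosed.eq_map_mul_C_of_dvd K hb0monic hdvd
  rw [hgmonic.leadingCoeff, map_one, mul_one] at hg'
  -- T = X^m - g'
  have hT : (X ^ m - g' : R[X]).map (algebraMap R K) = SK := by
    rw [Polynomial.map_sub, Polynomial.map_pow, Polynomial.map_X, hg']
    ring
  have hfinal : P = Q * (X ^ m - g') := by
    apply pinj
    rw [Polynomial.map_mul, hT, ← hPK, ← hQK, hPQ]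
  exact Ideal.mem_span_singleton'.mpr ⟨X ^ m - g', by rw [mul_comm, ← hfinal]⟩
end

section
/- Every normal commutative ring is locally without zero divisors (a pf-ring): if $ab = 0$ then there exists $u \in R$ with $ua = 0$ and $(1-u)b = 0$. -/
/-- A normal ring is locally without zero divisors (a pf-ring). -/
theorem normal_is_pf_ring {R : Type*} [CommRing R] (hR : IsNormalRing R) :
    ∀ a b : R, a * b = 0 → ∃ u : R, u * a = 0 ∧ (1 - u) * b = 0 := by
  intro a b hab
  -- b is integral over (a+b): b² = (a+b)b
  have h1 : b ∈ Ideal.span {a + b} := by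
    apply hR b (a + b)
    refine ⟨2, by norm_num, fun i => if i = 0 then -1 else 0, ?_⟩
    simp [Finset.sum_range_succ]
    ring_nf
    linear_combination -hab
  rw [Ideal.mem_span_singleton] at h1
  obtain ⟨c, hc⟩ := h1
  -- x = c*a is nilpotent, hence 0 by normality over (0)
  have hx : c * a = 0 := by
    have hsq : (c * a) ^ 2 = 0 := by
      have : c * a = (1 - c) * b := by linear_combination -hc
      calc (c * a) ^ 2 = (c * a) * ((1 - c) * b) := by rw [← this]; ring
        _ = c * (1 - c) * (a * b) := by ring
        _ = 0 := by rw [hab]; ring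
    have h0 : c * a ∈ Ideal.span ({0} : Set R) := by
      apply hR (c * a) 0
      refine ⟨2, by norm_num, 0, ?_⟩
      simpa using hsq
    rw [Ideal.mem_span_singleton] at h0
    exact zero_dvd_iff.mp h0
  exact ⟨c, hx, by linear_combination hc + hx⟩
end

section
/- If $R$ is a normal commutative ring, then the polynomial ring $R[X]$ is normal. -/
section Helpers

variable {A : Type*} [CommRing A]

lemma rel_mul_both (x b a : A) (n : ℕ) (u : ℕ → A) :
    x ^ n * (b ^ n + ∑ i ∈ Finset.range n, u i * a ^ (i + 1) * b ^ (n - 1 - i))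
      = (x * b) ^ n + ∑ i ∈ Finset.range n,
          u i * (x * a) ^ (i + 1) * (x * b) ^ (n - 1 - i) := by
  rw [mul_add, ← mul_pow, Finset.mul_sum]
  congr 1
  refine Finset.sum_congr rfl fun i hi => ?_
  have hi' : i + 1 + (n - 1 - i) = n := by
    have := Finset.mem_range.mp hi; omega
  have hx' : x ^ n = x ^ (i+1) * x ^ (n-1-i) := by rw [← pow_add, hi']
  rw [hx', mul_pow, mul_pow]; ring

lemma rel_mul_left (x b a : A) (n : ℕ) (u : ℕ → A) :
    x ^ n * (b ^ n + ∑ i ∈ Finset.range n, u i * a ^ (i + 1) * b ^ (n - 1 - i))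
      = (x * b) ^ n + ∑ i ∈ Finset.range n,
          (x ^ (i+1) * u i) * a ^ (i + 1) * (x * b) ^ (n - 1 - i) := by
  rw [mul_add, ← mul_pow, Finset.mul_sum]
  congr 1
  refine Finset.sum_congr rfl fun i hi => ?_
  have hi' : i + 1 + (n - 1 - i) = n := by
    have := Finset.mem_range.mp hi; omega
  have hx' : x ^ n = x ^ (i+1) * x ^ (n-1-i) := by rw [← pow_add, hi']
  rw [hx', mul_pow]; ring

lemma pow_mul_of_pos {x : A} {n : ℕ} (hn : 0 < n) (y : A) (h : x * y = 0) :
    x ^ n * y = 0 := by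
  rw [show n = n - 1 + 1 by omega, pow_succ, mul_assoc, h, mul_zero]

lemma isReduced_of_normal {R : Type*} [CommRing R] (hR : IsNormalRing R) :
    IsReduced R := by
  constructor
  rintro x ⟨k, hk⟩
  rcases Nat.eq_zero_or_pos k with rfl | hkpos
  · rw [pow_zero] at hk
    exact (subsingleton_of_zero_eq_one hk.symm).elim x 0
  · have hx : x ∈ Ideal.span ({0} : Set R) := by
      refine hR x 0 ⟨k, hkpos, 0, ?_⟩
      simp [hk]
    exact zero_dvd_iff.mp (Ideal.mem_span_singleton.mp hx)

lemma split_of_normal {R : Type*} [CommRing R] (hR : IsNormalRing R) {x y : R}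
    (h : x * y = 0) : ∃ z, x * x * (1 - z) = 0 ∧ y * y * z = 0 := by
  have hx : x ∈ Ideal.span ({x + y} : Set R) := by
    refine hR x (x + y) ⟨2, two_pos, fun i => if i = 0 then -1 else 0, ?_⟩
    rw [Finset.sum_range_succ, Finset.sum_range_succ, Finset.range_zero,
      Finset.sum_empty]
    norm_num
    linear_combination -h
  obtain ⟨z, hz⟩ := Ideal.mem_span_singleton.mp hx
  exact ⟨z, by linear_combination x * hz + z * h, by linear_combination (-y) * hz + (1 - z) * h⟩

end Helpers

section P2
variable {R : Type*} [CommRing R]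

lemma loc_domain (hR : IsNormalRing R) (p : Ideal R) [p.IsPrime] :
    IsDomain (Localization.AtPrime p) := by
  haveI : IsReduced R := isReduced_of_normal hR
  set A := Localization.AtPrime p
  set φ := algebraMap R A with hφ
  haveI : NoZeroDivisors A := by
    constructor
    intro X Y hXY
    by_contra hcon
    push_neg at hcon
    obtain ⟨hX, hY⟩ := hcon
    obtain ⟨⟨x, s⟩, hx⟩ := IsLocalization.surj p.primeCompl X
    obtain ⟨⟨y, t⟩, hy⟩ := IsLocalization.surj p.primeCompl Y
    have h0 : φ (x * y) = 0 := by
      rw [map_mul, ← hx, ← hy, show X * φ ↑s * (Y * φ ↑t) = X * Y * (φ ↑s * φ ↑t) by ring,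
        hXY, zero_mul]
    obtain ⟨c, hc⟩ := (IsLocalization.map_eq_zero_iff p.primeCompl A _).mp h0
    have hcx : (↑c * x) * y = 0 := by rw [mul_assoc]; exact hc
    obtain ⟨z, h1, h2⟩ := split_of_normal hR hcx
    by_cases hz : z ∈ p
    · -- then 1 - z is invertible in A, so φ (c*x) is nilpotent, hence zero, so X = 0
      have hz1 : (1 : R) - z ∈ p.primeCompl := by
        intro hmem
        exact ‹p.IsPrime›.ne_top (p.eq_top_iff_one.mpr (by simpa using add_mem hmem hz))
      have hu : IsUnit (φ ((1:R) - z)) := IsLocalization.map_units A ⟨_, hz1⟩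
      have : φ (↑c * x) * φ (↑c * x) = 0 := by
        have := congrArg φ h1
        rw [map_mul, map_mul, map_zero] at this
        exact (IsUnit.mul_left_eq_zero hu).mp this
      have hnil : φ (↑c * x) = 0 :=
        IsReduced.eq_zero _ ⟨2, by rw [pow_two]; exact this⟩
      have hux : φ x = 0 := by
        rw [map_mul] at hnil
        exact (IsUnit.mul_right_eq_zero (IsLocalization.map_units A c)).mp hnil
      exact hX ((IsUnit.mul_left_eq_zero (IsLocalization.map_units A s)).mp
        (by rw [hx, hux]))
    · have hu : IsUnit (φ z) := IsLocalization.map_units A (⟨z, hz⟩ : p.primeCompl)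
      have : φ (y * y) = 0 := by
        have h := congrArg φ h2
        rw [map_mul, map_zero] at h
        exact (IsUnit.mul_left_eq_zero hu).mp h
      have hnil : φ y = 0 :=
        IsReduced.eq_zero _ ⟨2, by rw [pow_two, ← map_mul]; exact this⟩
      exact hY ((IsUnit.mul_left_eq_zero (IsLocalization.map_units A t)).mp
        (by rw [hy, hnil]))
  exact NoZeroDivisors.to_isDomain A

lemma loc_normal (hR : IsNormalRing R) (p : Ideal R) [p.IsPrime] :
    IsNormalRing (Localization.AtPrime p) := by
  set A := Localization.AtPrime p with hA
  set φ := algebraMap R A with hφ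
  rintro b a ⟨n, hn, u, E⟩
  obtain ⟨⟨b₀, s⟩, hb⟩ := IsLocalization.surj p.primeCompl b
  obtain ⟨⟨a₀, t⟩, ha⟩ := IsLocalization.surj p.primeCompl a
  choose cw hcw using fun i => IsLocalization.surj p.primeCompl (u i)
  simp only at hb ha hcw
  set W : R := ∏ j ∈ Finset.range n, (((cw j).2 : R)) with hWdef
  have hW : W ∈ p.primeCompl := Submonoid.prod_mem _ (fun j _ => (cw j).2.2)
  have E1 : (φ ↑t * b) ^ n + ∑ i ∈ Finset.range n,
      u i * (φ a₀) ^ (i + 1) * (φ ↑t * b) ^ (n - 1 - i) = 0 := by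
    have hE : φ ↑t * (b ^ n + ∑ i ∈ Finset.range n, u i * a ^ (i + 1) * b ^ (n - 1 - i)) = 0 := by
      rw [E, mul_zero]
    have h0 := pow_mul_of_pos hn _ hE
    rw [rel_mul_both] at h0
    rwa [show φ ↑t * a = φ a₀ by rw [mul_comm]; exact ha] at h0
  have E2 : (φ (↑s * W) * (φ ↑t * b)) ^ n + ∑ i ∈ Finset.range n,
      ((φ (↑s * W)) ^ (i + 1) * u i) * (φ a₀) ^ (i + 1) *
        (φ (↑s * W) * (φ ↑t * b)) ^ (n - 1 - i) = 0 := by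
    have hE : φ (↑s * W) * ((φ ↑t * b) ^ n + ∑ i ∈ Finset.range n,
        u i * (φ a₀) ^ (i + 1) * (φ ↑t * b) ^ (n - 1 - i)) = 0 := by rw [E1, mul_zero]
    have h0 := pow_mul_of_pos hn _ hE
    rwa [rel_mul_left] at h0
  set b₁ : R := W * ↑t * b₀ with hb₁
  set d : ℕ → R := fun i =>
    (↑s * W) ^ i * ↑s * (∏ j ∈ (Finset.range n).erase i, (((cw j).2 : R))) * (cw i).1 with hd
  have key_b : φ (↑s * W) * (φ ↑t * b) = φ b₁ := by
    rw [map_mul, hb₁, map_mul, map_mul,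
      show φ ↑s * φ W * (φ ↑t * b) = φ W * φ ↑t * (b * φ ↑s) by ring, hb]
  have key_d : ∀ i ∈ Finset.range n, (φ (↑s * W)) ^ (i + 1) * u i = φ (d i) := by
    intro i hi
    have hWsplit : (W : R) = ↑((cw i).2) * ∏ j ∈ (Finset.range n).erase i, (((cw j).2 : R)) :=
      (Finset.mul_prod_erase _ _ hi).symm
    simp only [hd, map_mul, map_pow]
    rw [← hcw i, pow_succ]
    rw [show (φ W : A) = φ ↑((cw i).2) *
        φ (∏ j ∈ (Finset.range n).erase i, (((cw j).2 : R))) by rw [← map_mul, ← hWsplit]]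
    ring
  have E3 : (φ b₁) ^ n + ∑ i ∈ Finset.range n,
      φ (d i) * (φ a₀) ^ (i + 1) * (φ b₁) ^ (n - 1 - i) = 0 := by
    have hs : ∑ i ∈ Finset.range n, φ (d i) * (φ a₀) ^ (i + 1) * (φ b₁) ^ (n - 1 - i)
        = ∑ i ∈ Finset.range n, ((φ (↑s * W)) ^ (i + 1) * u i) * (φ a₀) ^ (i + 1) *
            (φ (↑s * W) * (φ ↑t * b)) ^ (n - 1 - i) :=
      Finset.sum_congr rfl fun i hi => by rw [key_d i hi, key_b]
    rw [hs, show (φ b₁ : A) = φ (↑s * W) * (φ ↑t * b) from key_b.symm]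
    exact E2
  have E4 : φ (b₁ ^ n + ∑ i ∈ Finset.range n, d i * a₀ ^ (i + 1) * b₁ ^ (n - 1 - i)) = 0 := by
    rw [map_add, map_pow, map_sum]
    simpa only [map_mul, map_pow] using E3
  obtain ⟨m, hm⟩ := (IsLocalization.map_eq_zero_iff p.primeCompl A _).mp E4
  have E5 : (↑m * b₁) ^ n + ∑ i ∈ Finset.range n,
      ((↑m : R) ^ (i + 1) * d i) * a₀ ^ (i + 1) * ((↑m : R) * b₁) ^ (n - 1 - i) = 0 := by
    have h0 := pow_mul_of_pos hn _ hm
    rwa [rel_mul_left] at h0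
  obtain ⟨k, hk⟩ := Ideal.mem_span_singleton.mp (hR (↑m * b₁) a₀ ⟨n, hn, _, E5⟩)
  have he : (↑m * W * ↑t * ↑s : R) ∈ p.primeCompl :=
    mul_mem (mul_mem (mul_mem m.2 hW) t.2) s.2
  have hu : IsUnit (φ (↑m * W * ↑t * ↑s)) :=
    IsLocalization.map_units A (⟨_, he⟩ : p.primeCompl)
  have hbe : b * φ (↑m * W * ↑t * ↑s) = a * (φ ↑t * φ k) := by
    have h1 : b * φ (↑m * W * ↑t * ↑s) = φ ↑m * (φ W * φ ↑t * (b * φ ↑s)) := by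
      simp only [map_mul]; ring
    rw [h1, hb, show φ ↑m * (φ W * φ ↑t * φ b₀) = φ (↑m * b₁) by
        simp only [hb₁, map_mul],
      hk, map_mul, ← ha]
    ring
  have hforward : b = a * (φ ↑t * φ k) * ↑hu.unit⁻¹ := by
    rw [← hbe, mul_assoc, hu.mul_val_inv, mul_one]
  exact Ideal.mem_span_singleton.mpr ⟨φ ↑t * φ k * ↑hu.unit⁻¹, by rw [hforward]; ring⟩
end P2

section Part4

open Polynomial

lemma monic_helper {B : Type*} [CommRing B] (m n : ℕ) (w : ℕ → Polynomial B)
    (k : ℕ → ℕ)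
    (h : ∀ i ∈ Finset.range n, (w i * Polynomial.X ^ k i).degree < (m : WithBot ℕ)) :
    (Polynomial.X ^ m + ∑ i ∈ Finset.range n, w i * Polynomial.X ^ k i).Monic := by
  nontriviality B
  apply Polynomial.Monic.add_of_left (Polynomial.monic_X_pow m)
  rw [Polynomial.degree_X_pow]
  exact lt_of_le_of_lt (Polynomial.degree_sum_le _ _)
    ((Finset.sup_lt_iff (WithBot.bot_lt_coe m)).mpr h)

lemma ic_of_normal {A : Type*} [CommRing A] [IsDomain A] (hA : IsNormalRing A) :
    IsIntegrallyClosed A := by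
  rw [isIntegrallyClosed_iff (FractionRing A)]
  intro x hx
  obtain ⟨P, hmonic, hev₀⟩ := hx
  have hev : Polynomial.aeval x P = 0 := by rw [Polynomial.aeval_def]; exact hev₀
  rcases Nat.eq_zero_or_pos P.natDegree with hn0 | hn0
  · exfalso
    have hP1 : P = 1 := (Polynomial.Monic.natDegree_eq_zero hmonic).mp hn0
    rw [hP1, map_one] at hev
    exact one_ne_zero hev
  · set n := P.natDegree with hn
    obtain ⟨⟨b, a⟩, hmk⟩ := IsLocalization.mk'_surjective (nonZeroDivisors A) x
    have hxa : x * algebraMap A (FractionRing A) ↑a = algebraMap A (FractionRing A) b := by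
      rw [← hmk]; exact IsLocalization.mk'_spec _ b a
    have hpow : ∀ j : ℕ, (algebraMap A (FractionRing A) ↑a) ^ j * x ^ j
        = (algebraMap A (FractionRing A) b) ^ j := fun j => by
      rw [← mul_pow, mul_comm, hxa]
    have key2 : (algebraMap A (FractionRing A) ↑a) ^ n * (Polynomial.aeval x P)
        = (algebraMap A (FractionRing A) b) ^ n + ∑ j ∈ Finset.range n,
          algebraMap A (FractionRing A) (P.coeff j) *
            (algebraMap A (FractionRing A) ↑a) ^ (n - j) *
            (algebraMap A (FractionRing A) b) ^ j := by
      rw [Polynomial.aeval_eq_sum_range, Finset.mul_sum, Finset.sum_range_succ, ← hn,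
        hmonic.coeff_natDegree, one_smul, add_comm]
      congr 1
      · exact hpow n
      · refine Finset.sum_congr rfl fun j hj => ?_
        have hj' : j ≤ n := le_of_lt (Finset.mem_range.mp hj)
        rw [Algebra.smul_def]
        have hsplit : (algebraMap A (FractionRing A) ↑a) ^ n
            = (algebraMap A (FractionRing A) ↑a) ^ (n - j) *
              (algebraMap A (FractionRing A) ↑a) ^ j := by
          rw [← pow_add]; congr 1; omega
        rw [hsplit]
        linear_combination (algebraMap A (FractionRing A) (P.coeff j) *
          (algebraMap A (FractionRing A) ↑a) ^ (n - j)) * hpow j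
    have hB : b ^ n + ∑ j ∈ Finset.range n, P.coeff j * (↑a : A) ^ (n - j) * b ^ j = 0 := by
      apply IsFractionRing.injective A (FractionRing A)
      rw [map_zero, map_add, map_pow, map_sum]
      simp only [map_mul, map_pow]
      rw [← key2, hev, mul_zero]
    have hrel : b ^ n + ∑ i ∈ Finset.range n,
        P.coeff (n - 1 - i) * (↑a : A) ^ (i + 1) * b ^ (n - 1 - i) = 0 := by
      rw [show ∑ i ∈ Finset.range n, P.coeff (n - 1 - i) * (↑a : A) ^ (i + 1) * b ^ (n - 1 - i)
          = ∑ j ∈ Finset.range n, P.coeff j * (↑a : A) ^ (n - j) * b ^ j from ?_]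
      · exact hB
      · rw [← Finset.sum_range_reflect (fun j => P.coeff j * (↑a : A) ^ (n - j) * b ^ j) n]
        refine Finset.sum_congr rfl fun i hi => ?_
        have hi' := Finset.mem_range.mp hi
        rw [show n - (n - 1 - i) = i + 1 by omega]
    obtain ⟨y, hy⟩ := Ideal.mem_span_singleton.mp (hA b ↑a ⟨n, hn0, _, hrel⟩)
    refine ⟨y, ?_⟩
    have hane : algebraMap A (FractionRing A) ↑a ≠ 0 :=
      IsFractionRing.to_map_ne_zero_of_mem_nonZeroDivisors a.2
    apply mul_right_cancel₀ hane
    rw [hxa, hy, map_mul]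
    ring

lemma normal_of_ic {A : Type*} [CommRing A] [IsDomain A] [IsIntegrallyClosed A] :
    IsNormalRing A := by
  rintro b a ⟨n, hn, u, E⟩
  by_cases ha : a = 0
  · subst ha
    have hb : b ^ n = 0 := by
      simpa [zero_pow (Nat.succ_ne_zero _)] using E
    rw [pow_eq_zero_iff hn.ne'] at hb
    rw [hb]
    exact Submodule.zero_mem _
  · have hψa : algebraMap A (FractionRing A) a ≠ 0 := fun h =>
      ha (IsFractionRing.injective A (FractionRing A) (by rw [h, map_zero]))
    set x : FractionRing A := algebraMap A (FractionRing A) b / algebraMap A (FractionRing A) a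
      with hx
    have hxa : x * algebraMap A (FractionRing A) a = algebraMap A (FractionRing A) b :=
      div_mul_cancel₀ _ hψa
    have hpow : ∀ j : ℕ, (algebraMap A (FractionRing A) a) ^ j * x ^ j
        = (algebraMap A (FractionRing A) b) ^ j := fun j => by
      rw [← mul_pow, mul_comm, hxa]
    have hQmonic : (Polynomial.X ^ n +
        ∑ i ∈ Finset.range n, Polynomial.C (u i) * Polynomial.X ^ (n - 1 - i)).Monic := by
      apply monic_helper
      intro i hi
      have hi' := Finset.mem_range.mp hi
      refine lt_of_le_of_lt (Polynomial.degree_mul_le _ _) ?_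
      rw [Polynomial.degree_X_pow]
      refine lt_of_le_of_lt (add_le_add_left Polynomial.degree_C_le _) ?_
      rw [zero_add]
      exact_mod_cast (by omega : n - 1 - i < n)
    have haa : Polynomial.aeval x (Polynomial.X ^ n +
        ∑ i ∈ Finset.range n, Polynomial.C (u i) * Polynomial.X ^ (n - 1 - i))
        = x ^ n + ∑ i ∈ Finset.range n,
            algebraMap A (FractionRing A) (u i) * x ^ (n - 1 - i) := by
      simp only [map_add, map_pow, map_sum, map_mul, Polynomial.aeval_X, Polynomial.aeval_C]
    have hkey : (algebraMap A (FractionRing A) a) ^ n * (x ^ n + ∑ i ∈ Finset.range n,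
        algebraMap A (FractionRing A) (u i) * x ^ (n - 1 - i))
        = algebraMap A (FractionRing A) (b ^ n +
          ∑ i ∈ Finset.range n, u i * a ^ (i + 1) * b ^ (n - 1 - i)) := by
      rw [map_add, map_pow, map_sum, mul_add, Finset.mul_sum]
      congr 1
      · exact hpow n
      · refine Finset.sum_congr rfl fun i hi => ?_
        have hi' := Finset.mem_range.mp hi
        simp only [map_mul, map_pow]
        have hsplit : (algebraMap A (FractionRing A) a) ^ n
            = (algebraMap A (FractionRing A) a) ^ (i + 1) *
              (algebraMap A (FractionRing A) a) ^ (n - 1 - i) := by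
          rw [← pow_add]; congr 1; omega
        rw [hsplit]
        linear_combination (algebraMap A (FractionRing A) (u i) *
          (algebraMap A (FractionRing A) a) ^ (i + 1)) * hpow (n - 1 - i)
    have hev : Polynomial.aeval x (Polynomial.X ^ n +
        ∑ i ∈ Finset.range n, Polynomial.C (u i) * Polynomial.X ^ (n - 1 - i)) = 0 := by
      rw [haa]
      have h0 : (algebraMap A (FractionRing A) a) ^ n * (x ^ n + ∑ i ∈ Finset.range n,
          algebraMap A (FractionRing A) (u i) * x ^ (n - 1 - i)) = 0 := by
        rw [hkey, E, map_zero]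
      exact (mul_eq_zero.mp h0).resolve_left (pow_ne_zero _ hψa)
    obtain ⟨y, hy⟩ := (isIntegrallyClosed_iff (FractionRing A)).mp
      ‹IsIntegrallyClosed A› ⟨_, hQmonic, by rw [← Polynomial.aeval_def]; exact hev⟩
    refine Ideal.mem_span_singleton.mpr ⟨y, ?_⟩
    apply IsFractionRing.injective A (FractionRing A)
    rw [map_mul, hy, ← hxa]
    ring

end Part4

section Part5

open Polynomial

lemma rel_div {A : Type*} [CommRing A] (x b : A) (n : ℕ) (u : ℕ → A) :
    x ^ n * (b ^ n + ∑ i ∈ Finset.range n, u i * b ^ (n - 1 - i))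
      = (x * b) ^ n + ∑ i ∈ Finset.range n, u i * x ^ (i + 1) * (x * b) ^ (n - 1 - i) := by
  rw [mul_add, ← mul_pow, Finset.mul_sum]
  congr 1
  refine Finset.sum_congr rfl fun i hi => ?_
  have hi' : i + 1 + (n - 1 - i) = n := by
    have := Finset.mem_range.mp hi; omega
  have hx' : x ^ n = x ^ (i + 1) * x ^ (n - 1 - i) := by rw [← pow_add, hi']
  rw [hx', mul_pow]; ring

lemma clear_denom {R : Type*} [CommRing R] (M : Submonoid R) (A : Type*) [CommRing A]
    [Algebra R A] [IsLocalization M A] (H : Polynomial A) :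
    ∃ (s : M) (h : Polynomial R),
      H * Polynomial.C (algebraMap R A ↑s) = Polynomial.map (algebraMap R A) h := by
  induction H using Polynomial.induction_on' with
  | add p q hp hq =>
    obtain ⟨s1, h1, e1⟩ := hp
    obtain ⟨s2, h2, e2⟩ := hq
    refine ⟨s1 * s2, h1 * Polynomial.C (↑s2 : R) + h2 * Polynomial.C (↑s1 : R), ?_⟩
    rw [Polynomial.map_add, Polynomial.map_mul, Polynomial.map_mul, Polynomial.map_C,
      Polynomial.map_C, ← e1, ← e2, Submonoid.coe_mul, map_mul, Polynomial.C_mul]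
    ring
  | monomial j c =>
    obtain ⟨⟨r, s⟩, hrs⟩ := IsLocalization.surj M c
    simp only at hrs
    exact ⟨s, Polynomial.monomial j r,
      by rw [Polynomial.monomial_mul_C, hrs, Polynomial.map_monomial]⟩

lemma kill_denom {R : Type*} [CommRing R] (M : Submonoid R) (A : Type*) [CommRing A]
    [Algebra R A] [IsLocalization M A] (q : Polynomial R)
    (hq : q.map (algebraMap R A) = 0) : ∃ t : M, Polynomial.C (t : R) * q = 0 := by
  have hc : ∀ j, algebraMap R A (q.coeff j) = 0 := fun j => by
    rw [← Polynomial.coeff_map, hq, Polynomial.coeff_zero]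
  choose tt htt using fun j => (IsLocalization.map_eq_zero_iff M A _).mp (hc j)
  refine ⟨∏ j ∈ q.support, tt j, ?_⟩
  ext j
  rw [Polynomial.coeff_C_mul, Polynomial.coeff_zero]
  by_cases hj : j ∈ q.support
  · rw [Submonoid.coe_finset_prod, ← Finset.mul_prod_erase q.support _ hj, mul_right_comm,
      htt j, zero_mul]
  · rw [Polynomial.notMem_support_iff.mp hj, mul_zero]

lemma normal_polynomial_of_ic {A : Type*} [CommRing A] [IsDomain A] [IsIntegrallyClosed A] :
    IsNormalRing (Polynomial A) := by
  rintro f g ⟨n, hn, u, E⟩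
  by_cases hg : g = 0
  · subst hg
    have hf : f ^ n = 0 := by simpa [zero_pow (Nat.succ_ne_zero _)] using E
    rw [pow_eq_zero_iff hn.ne'] at hf
    rw [hf]; exact Submodule.zero_mem _
  · have hinj : Function.Injective (algebraMap A (FractionRing A)) :=
      IsFractionRing.injective A _
    have hmapinj := Polynomial.map_injective _ hinj
    have hgK : g.map (algebraMap A (FractionRing A)) ≠ 0 := fun h =>
      hg (hmapinj (by rw [h, Polynomial.map_zero]))
    have EK := congrArg (Polynomial.mapRingHom (algebraMap A (FractionRing A))) E
    simp only [map_add, map_pow, map_sum, map_mul, map_zero, Polynomial.coe_mapRingHom] at EK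
    obtain ⟨H, hH⟩ := Ideal.mem_span_singleton.mp
      ((normal_of_ic (A := Polynomial (FractionRing A)))
        (f.map (algebraMap A (FractionRing A))) (g.map (algebraMap A (FractionRing A)))
        ⟨n, hn, _, EK⟩)
    -- hH : f.map _ = g.map _ * H
    -- H satisfies an integral equation over A[X]
    have h1 := rel_div (g.map (algebraMap A (FractionRing A))) H n
      (fun i => (u i).map (algebraMap A (FractionRing A)))
    rw [← hH] at h1
    have hS : H ^ n + ∑ i ∈ Finset.range n,
        (u i).map (algebraMap A (FractionRing A)) * H ^ (n - 1 - i) = 0 := by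
      have h2 : (g.map (algebraMap A (FractionRing A))) ^ n * (H ^ n + ∑ i ∈ Finset.range n,
          (u i).map (algebraMap A (FractionRing A)) * H ^ (n - 1 - i)) = 0 := by
        rw [h1]
        exact EK
      exact (mul_eq_zero.mp h2).resolve_left (pow_ne_zero _ hgK)
    -- the auxiliary polynomial over A
    set N := (Finset.range n).sup (fun i => (u i).natDegree) with hN
    set r := H.natDegree + N + 1 with hr
    have hPmonic : ((Polynomial.X : Polynomial (FractionRing A)) ^ r - H).Monic := by
      rw [sub_eq_add_neg]
      apply Polynomial.Monic.add_of_left (Polynomial.monic_X_pow r)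
      rw [Polynomial.degree_neg, Polynomial.degree_X_pow]
      refine lt_of_le_of_lt Polynomial.degree_le_natDegree ?_
      exact_mod_cast (by omega : H.natDegree < r)
    have hΨmonic : ((Polynomial.X : Polynomial A) ^ (r * n) +
        ∑ i ∈ Finset.range n, u i * Polynomial.X ^ (r * (n - 1 - i))).Monic := by
      apply monic_helper
      intro i hi
      have hi' := Finset.mem_range.mp hi
      have hNi : (u i).natDegree ≤ N := by
        rw [hN]; exact Finset.le_sup (f := fun j => (u j).natDegree) hi
      refine lt_of_le_of_lt (Polynomial.degree_mul_le _ _) ?_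
      rw [Polynomial.degree_X_pow]
      refine lt_of_le_of_lt (add_le_add_left Polynomial.degree_le_natDegree
        ((r * (n - 1 - i) : ℕ) : WithBot ℕ)) ?_
      have harith : (u i).natDegree + r * (n - 1 - i) < r * n := by
        have h2 : r * (n - 1 - i) + r ≤ r * n := by
          have h3 : (n - 1 - i) + 1 ≤ n := by omega
          calc r * (n - 1 - i) + r = r * ((n - 1 - i) + 1) := by ring
            _ ≤ r * n := Nat.mul_le_mul_left _ h3
        omega
      exact_mod_cast harith
    -- the divisibility
    have hFH : Polynomial.eval H ((Polynomial.X : Polynomial (Polynomial (FractionRing A))) ^ n +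
        ∑ i ∈ Finset.range n, Polynomial.C ((u i).map (algebraMap A (FractionRing A))) *
          Polynomial.X ^ (n - 1 - i)) = 0 := by
      simp only [Polynomial.eval_add, Polynomial.eval_pow, Polynomial.eval_finset_sum,
        Polynomial.eval_mul, Polynomial.eval_C, Polynomial.eval_X]
      exact hS
    have hdvd : ((Polynomial.X : Polynomial (FractionRing A)) ^ r - H) ∣
        Polynomial.eval ((Polynomial.X : Polynomial (FractionRing A)) ^ r)
          ((Polynomial.X : Polynomial (Polynomial (FractionRing A))) ^ n +
            ∑ i ∈ Finset.range n, Polynomial.C ((u i).map (algebraMap A (FractionRing A))) *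
              Polynomial.X ^ (n - 1 - i)) := by
      have h2 := Polynomial.sub_dvd_eval_sub ((Polynomial.X : Polynomial (FractionRing A)) ^ r) H
        ((Polynomial.X : Polynomial (Polynomial (FractionRing A))) ^ n +
          ∑ i ∈ Finset.range n, Polynomial.C ((u i).map (algebraMap A (FractionRing A))) *
            Polynomial.X ^ (n - 1 - i))
      rwa [hFH, sub_zero] at h2
    have hΨmap : Polynomial.map (algebraMap A (FractionRing A))
        ((Polynomial.X : Polynomial A) ^ (r * n) +
          ∑ i ∈ Finset.range n, u i * Polynomial.X ^ (r * (n - 1 - i)))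
        = Polynomial.eval ((Polynomial.X : Polynomial (FractionRing A)) ^ r)
          ((Polynomial.X : Polynomial (Polynomial (FractionRing A))) ^ n +
            ∑ i ∈ Finset.range n, Polynomial.C ((u i).map (algebraMap A (FractionRing A))) *
              Polynomial.X ^ (n - 1 - i)) := by
      rw [← Polynomial.coe_mapRingHom]
      simp only [map_add, map_pow, map_sum, map_mul, Polynomial.coe_mapRingHom,
        Polynomial.map_X, Polynomial.eval_add, Polynomial.eval_pow, Polynomial.eval_finset_sum,
        Polynomial.eval_mul, Polynomial.eval_C, Polynomial.eval_X, ← pow_mul]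
    have hdvd' : ((Polynomial.X : Polynomial (FractionRing A)) ^ r - H) ∣
        Polynomial.map (algebraMap A (FractionRing A))
          ((Polynomial.X : Polynomial A) ^ (r * n) +
            ∑ i ∈ Finset.range n, u i * Polynomial.X ^ (r * (n - 1 - i))) := by
      rw [hΨmap]; exact hdvd
    obtain ⟨P', hP'⟩ := IsIntegrallyClosed.eq_map_mul_C_of_dvd (FractionRing A) hΨmonic hdvd'
    rw [hPmonic.leadingCoeff, Polynomial.C_1, mul_one] at hP'
    have hHmap : H = Polynomial.map (algebraMap A (FractionRing A))
        ((Polynomial.X : Polynomial A) ^ r - P') := by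
      rw [Polynomial.map_sub, Polynomial.map_pow, Polynomial.map_X, hP']
      ring
    exact Ideal.mem_span_singleton.mpr ⟨Polynomial.X ^ r - P',
      hmapinj (by rw [Polynomial.map_mul, ← hHmap, hH])⟩

end Part5

theorem polynomial_normal_of_normal {R : Type*} [CommRing R]
    (hR : IsNormalRing R) : IsNormalRing (Polynomial R) := by
  rintro f g ⟨n, hn, u, E⟩
  set I : Ideal R := Ideal.comap (Polynomial.C : R →+* Polynomial R)
    (Submodule.colon (Ideal.span {g}) (Ideal.span {f})) with hIdef
  have hImem : ∀ x : R, x ∈ I ↔ Polynomial.C x * f ∈ Ideal.span {g} := fun x => by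
    rw [hIdef]
    exact Iff.trans Ideal.mem_comap Ideal.mem_colon_span_singleton
  have hItop : I = ⊤ := by
    by_contra hne
    obtain ⟨m, hmax, hIm⟩ := Ideal.exists_le_maximal I hne
    haveI : m.IsPrime := hmax.isPrime
    haveI hdom : IsDomain (Localization.AtPrime m) := loc_domain hR m
    haveI hic : IsIntegrallyClosed (Localization.AtPrime m) := ic_of_normal (loc_normal hR m)
    have EA := congrArg (Polynomial.mapRingHom (algebraMap R (Localization.AtPrime m))) E
    simp only [map_add, map_pow, map_sum, map_mul, map_zero, Polynomial.coe_mapRingHom] at EA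
    obtain ⟨H, hH⟩ := Ideal.mem_span_singleton.mp
      ((normal_polynomial_of_ic (A := Localization.AtPrime m))
        (f.map (algebraMap R (Localization.AtPrime m)))
        (g.map (algebraMap R (Localization.AtPrime m))) ⟨n, hn, _, EA⟩)
    obtain ⟨s, h, hsh⟩ := clear_denom m.primeCompl (Localization.AtPrime m) H
    have hzero : Polynomial.map (algebraMap R (Localization.AtPrime m))
        (Polynomial.C (↑s : R) * f - g * h) = 0 := by
      rw [Polynomial.map_sub, Polynomial.map_mul, Polynomial.map_mul, Polynomial.map_C,
        hH, ← hsh]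
      ring
    obtain ⟨t, ht⟩ := kill_denom m.primeCompl (Localization.AtPrime m) _ hzero
    have hmemI : (↑t * ↑s : R) ∈ I := by
      rw [hImem, map_mul]
      exact Ideal.mem_span_singleton.mpr ⟨Polynomial.C (↑t : R) * h, by linear_combination ht⟩
    exact (mul_mem t.2 s.2 : (↑t * ↑s : R) ∈ m.primeCompl) (hIm hmemI)
  have h1 : (1 : R) ∈ I := hItop ▸ Submodule.mem_top
  have h2 := (hImem 1).mp h1
  rwa [map_one, one_mul] at h2
end

section
/- Let $R$ be a commutative ring and $f \in R[X]$ a monic polynomial with $f = g h$ for monic polynomials $g, h \in R[X]$. Let $S = R[X]/(f)$ with root $x$, and define $R_{\{f\}} = S[1/f'(x)]$. Then $R_{\{f\}}$ is isomorphic as an $R$-algebra to $R_{\{g\}}[1/h(x_g)] \times R_{\{h\}}[1/g(x_h)]$, where $x_g, x_h$ are the canonical roots of $g$ and $h$ in the respective quotients. -/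
lemma dvd_add_pow_mul {R : Type*} [CommRing R] {g h A B p : R} {n m : ℕ}
    (hA : h ∣ A) (hB : g ∣ B) (h1 : g ∣ A ^ n * p) (h2 : h ∣ B ^ m * p) :
    g * h ∣ (A + B) ^ (n + m + 1) * p := by
  obtain ⟨a, ha⟩ := hA
  obtain ⟨b, hb⟩ := hB
  obtain ⟨q1, hq1⟩ := h1
  obtain ⟨q2, hq2⟩ := h2
  rw [add_pow, Finset.sum_mul]
  apply Finset.dvd_sum
  intro i hi
  simp only [Finset.mem_range] at hi
  set N := n + m + 1 with hN
  rcases eq_or_ne i 0 with rfl | hi0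
  · have e : A ^ 0 * B ^ (N - 0) * ((N.choose 0 : ℕ) : R) * p
        = B ^ (n + 1) * ((N.choose 0 : ℕ) : R) * (B ^ m * p) := by
      rw [pow_zero, one_mul, show N - 0 = (n + 1) + m by omega, pow_add]; ring
    rw [e, hq2, hb]
    exact ⟨b ^ (n + 1) * g ^ n * ((N.choose 0 : ℕ) : R) * q2, by ring⟩
  · rcases eq_or_ne i N with rfl | hiN
    · have e : A ^ N * B ^ (N - N) * ((N.choose N : ℕ) : R) * p
          = A ^ (m + 1) * B ^ (N - N) * ((N.choose N : ℕ) : R) * (A ^ n * p) := by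
        rw [show N = (m + 1) + n by omega, pow_add]; ring
      rw [e, hq1, ha]
      exact ⟨a ^ (m + 1) * h ^ m * B ^ (N - N) * ((N.choose N : ℕ) : R) * q1, by ring⟩
    · obtain ⟨j, rfl⟩ : ∃ j, i = j + 1 := ⟨i - 1, by omega⟩
      obtain ⟨k, hk⟩ : ∃ k, N - (j + 1) = k + 1 := ⟨N - (j + 1) - 1, by omega⟩
      have e : A ^ (j + 1) * B ^ (N - (j + 1)) * ((N.choose (j + 1) : ℕ) : R) * p
          = A * B * (A ^ j * B ^ k * ((N.choose (j + 1) : ℕ) : R) * p) := by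
        rw [hk, pow_succ, pow_succ]; ring
      rw [e, ha, hb]
      exact ⟨a * b * ((h * a) ^ j * (g * b) ^ k * ((N.choose (j + 1) : ℕ) : R) * p), by ring⟩
open Polynomial

set_option maxHeartbeats 1000000 in
set_option synthInstance.maxHeartbeats 400000 in
theorem Rf_factorization_iso {R : Type*} [CommRing R] (f g h : R[X])
    (hg : g.Monic) (hh : h.Monic) (hfac : f = g * h) :
    Nonempty
      ((Localization.Away
          (Polynomial.aeval (AdjoinRoot.root f) (Polynomial.derivative f))) ≃ₐ[R]
        (Localization.Away
            ((algebraMap (AdjoinRoot g)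
                (Localization.Away (Polynomial.aeval (AdjoinRoot.root g)
                  (Polynomial.derivative g))))
              (Polynomial.aeval (AdjoinRoot.root g) h)) ×
         Localization.Away
            ((algebraMap (AdjoinRoot h)
                (Localization.Away (Polynomial.aeval (AdjoinRoot.root h)
                  (Polynomial.derivative h))))
              (Polynomial.aeval (AdjoinRoot.root h) g)))) := by
  subst hfac
  classical
  set Ag := Localization.Away (Polynomial.aeval (AdjoinRoot.root g) (Polynomial.derivative g)) with hAg
  set A := Localization.Away ((algebraMap (AdjoinRoot g) Ag) (Polynomial.aeval (AdjoinRoot.root g) h)) with hA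
  set Bh := Localization.Away (Polynomial.aeval (AdjoinRoot.root h) (Polynomial.derivative h)) with hBh
  set B := Localization.Away ((algebraMap (AdjoinRoot h) Bh) (Polynomial.aeval (AdjoinRoot.root h) g)) with hB
  have hg0 : Polynomial.aeval (AdjoinRoot.root g) (g * h) = 0 := by
    rw [map_mul, AdjoinRoot.aeval_eq, AdjoinRoot.mk_self, zero_mul]
  have hh0 : Polynomial.aeval (AdjoinRoot.root h) (g * h) = 0 := by
    have : Polynomial.aeval (AdjoinRoot.root h) h = 0 := by
      rw [AdjoinRoot.aeval_eq, AdjoinRoot.mk_self]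
    rw [map_mul, this, mul_zero]
  set πg : AdjoinRoot (g * h) →ₐ[R] AdjoinRoot g :=
    AdjoinRoot.liftAlgHom (g * h) (Algebra.ofId R _) (AdjoinRoot.root g) hg0 with hπg
  set πh : AdjoinRoot (g * h) →ₐ[R] AdjoinRoot h :=
    AdjoinRoot.liftAlgHom (g * h) (Algebra.ofId R _) (AdjoinRoot.root h) hh0 with hπh
  have πg_mk : ∀ p : R[X], πg (AdjoinRoot.mk (g * h) p) = AdjoinRoot.mk g p := fun p => by
    rw [hπg]; exact AdjoinRoot.aeval_eq p
  have πh_mk : ∀ p : R[X], πh (AdjoinRoot.mk (g * h) p) = AdjoinRoot.mk h p := fun p => by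
    rw [hπh]; exact AdjoinRoot.aeval_eq p
  set dg : AdjoinRoot g :=
    Polynomial.aeval (AdjoinRoot.root g) h * Polynomial.aeval (AdjoinRoot.root g) (derivative g) with hdg
  set dh : AdjoinRoot h :=
    Polynomial.aeval (AdjoinRoot.root h) g * Polynomial.aeval (AdjoinRoot.root h) (derivative h) with hdh
  haveI instA : IsLocalization.Away dg A := inferInstance
  haveI instB : IsLocalization.Away dh B := inferInstance
  -- image of derivative:
  have keyg : AdjoinRoot.mk g (derivative (g * h)) = dg := by
    rw [derivative_mul, map_add, map_mul, map_mul, AdjoinRoot.mk_self, zero_mul, add_zero,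
      hdg, AdjoinRoot.aeval_eq, AdjoinRoot.aeval_eq, mul_comm]
  have keyh : AdjoinRoot.mk h (derivative (g * h)) = dh := by
    rw [derivative_mul, map_add, map_mul, map_mul, AdjoinRoot.mk_self, mul_zero, zero_add,
      hdh, AdjoinRoot.aeval_eq, AdjoinRoot.aeval_eq]
  set ψg : AdjoinRoot (g * h) →ₐ[R] A := (IsScalarTower.toAlgHom R (AdjoinRoot g) A).comp πg with hψg
  set ψh : AdjoinRoot (g * h) →ₐ[R] B := (IsScalarTower.toAlgHom R (AdjoinRoot h) B).comp πh with hψh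
  have ψg_mk : ∀ p : R[X], ψg (AdjoinRoot.mk (g * h) p)
      = algebraMap (AdjoinRoot g) A (AdjoinRoot.mk g p) := fun p => by
    rw [hψg]; simp [πg_mk p]
  have ψh_mk : ∀ p : R[X], ψh (AdjoinRoot.mk (g * h) p)
      = algebraMap (AdjoinRoot h) B (AdjoinRoot.mk h p) := fun p => by
    rw [hψh]; simp [πh_mk p]
  set φ : AdjoinRoot (g * h) →ₐ[R] A × B := ψg.prod ψh with hφ
  set a : AdjoinRoot (g * h) :=
    Polynomial.aeval (AdjoinRoot.root (g * h)) (derivative (g * h)) with ha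
  have ha' : a = AdjoinRoot.mk (g * h) (derivative (g * h)) := AdjoinRoot.aeval_eq _
  letI : Algebra (AdjoinRoot (g * h)) (A × B) := φ.toRingHom.toAlgebra
  have halg : ∀ z, algebraMap (AdjoinRoot (g * h)) (A × B) z = φ z := fun _ => rfl
  haveI : IsScalarTower R (AdjoinRoot (g * h)) (A × B) :=
    IsScalarTower.of_algebraMap_eq (fun z => (φ.commutes z).symm)
  have hdg' : AdjoinRoot.mk g (h * derivative g) = dg := by
    rw [map_mul, hdg, AdjoinRoot.aeval_eq, AdjoinRoot.aeval_eq]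
  have hdh' : AdjoinRoot.mk h (g * derivative h) = dh := by
    rw [map_mul, hdh, AdjoinRoot.aeval_eq, AdjoinRoot.aeval_eq]
  have hzg : AdjoinRoot.mk g (g * derivative h) = 0 := by
    rw [map_mul, AdjoinRoot.mk_self, zero_mul]
  have hzh : AdjoinRoot.mk h (h * derivative g) = 0 := by
    rw [map_mul, AdjoinRoot.mk_self, zero_mul]
  have φa : algebraMap (AdjoinRoot (g * h)) (A × B) a
      = (algebraMap (AdjoinRoot g) A dg, algebraMap (AdjoinRoot h) B dh) := by
    rw [halg, ha', hφ, AlgHom.prod_apply, ψg_mk, ψh_mk, keyg, keyh]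
  haveI : IsLocalization.Away a (A × B) := by
    refine IsLocalization.Away.mk a ?_ ?_ ?_
    · rw [φa]
      obtain ⟨u, hu⟩ := IsLocalization.Away.algebraMap_isUnit (S := A) dg
      obtain ⟨v, hv⟩ := IsLocalization.Away.algebraMap_isUnit (S := B) dh
      exact ⟨MulEquiv.prodUnits.symm (u, v), by rw [← hu, ← hv]; rfl⟩
    · intro s
      obtain ⟨n1, s1, hs1⟩ := IsLocalization.Away.surj dg s.1
      obtain ⟨p1, rfl⟩ := AdjoinRoot.mk_surjective s1
      obtain ⟨n2, s2, hs2⟩ := IsLocalization.Away.surj dh s.2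
      obtain ⟨p2, rfl⟩ := AdjoinRoot.mk_surjective s2
      set N := max n1 n2 with hN
      refine ⟨N + 1, AdjoinRoot.mk (g * h)
        (p1 * (h * derivative g) ^ (N - n1) * (h * derivative g)
          + p2 * (g * derivative h) ^ (N - n2) * (g * derivative h)), ?_⟩
      have φt : algebraMap (AdjoinRoot (g * h)) (A × B) (AdjoinRoot.mk (g * h)
            (p1 * (h * derivative g) ^ (N - n1) * (h * derivative g)
              + p2 * (g * derivative h) ^ (N - n2) * (g * derivative h)))
          = (algebraMap (AdjoinRoot g) A (AdjoinRoot.mk g p1 * dg ^ (N - n1 + 1)),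
             algebraMap (AdjoinRoot h) B (AdjoinRoot.mk h p2 * dh ^ (N - n2 + 1))) := by
        have aevg : Polynomial.aeval (AdjoinRoot.root g) g = 0 := by
          rw [AdjoinRoot.aeval_eq, AdjoinRoot.mk_self]
        have aevh : Polynomial.aeval (AdjoinRoot.root h) h = 0 := by
          rw [AdjoinRoot.aeval_eq, AdjoinRoot.mk_self]
        rw [halg, hφ, AlgHom.prod_apply, ψg_mk, ψh_mk]
        have mg : AdjoinRoot.mk g
            (p1 * (h * derivative g) ^ (N - n1) * (h * derivative g)
              + p2 * (g * derivative h) ^ (N - n2) * (g * derivative h))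
            = AdjoinRoot.mk g p1 * dg ^ (N - n1 + 1) := by
          simp only [hdg, ← AdjoinRoot.aeval_eq, map_add, map_mul, map_pow, aevg,
            zero_mul, mul_zero, add_zero]
          ring
        have mh : AdjoinRoot.mk h
            (p1 * (h * derivative g) ^ (N - n1) * (h * derivative g)
              + p2 * (g * derivative h) ^ (N - n2) * (g * derivative h))
            = AdjoinRoot.mk h p2 * dh ^ (N - n2 + 1) := by
          simp only [hdh, ← AdjoinRoot.aeval_eq, map_add, map_mul, map_pow, aevh,
            zero_mul, mul_zero, zero_add]
          ring
        rw [mg, mh]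
      rw [φa, φt]
      have e1 : N + 1 = n1 + (N - n1 + 1) := by omega
      have e2 : N + 1 = n2 + (N - n2 + 1) := by omega
      have c1 : s.1 * ((algebraMap (AdjoinRoot g) A) dg) ^ (N + 1)
          = algebraMap (AdjoinRoot g) A (AdjoinRoot.mk g p1 * dg ^ (N - n1 + 1)) := by
        rw [e1, pow_add, ← mul_assoc, hs1, ← map_pow, ← map_mul]
      have c2 : s.2 * ((algebraMap (AdjoinRoot h) B) dh) ^ (N + 1)
          = algebraMap (AdjoinRoot h) B (AdjoinRoot.mk h p2 * dh ^ (N - n2 + 1)) := by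
        rw [e2, pow_add, ← mul_assoc, hs2, ← map_pow, ← map_mul]
      exact Prod.ext c1 c2
    · intro r1 r2 hr
      obtain ⟨p1', rfl⟩ := AdjoinRoot.mk_surjective r1
      obtain ⟨p2', rfl⟩ := AdjoinRoot.mk_surjective r2
      rw [halg, halg, hφ, AlgHom.prod_apply, AlgHom.prod_apply, ψg_mk, ψg_mk, ψh_mk, ψh_mk,
        Prod.ext_iff] at hr
      obtain ⟨h0g, h0h⟩ := hr
      obtain ⟨n1, hn1⟩ := IsLocalization.Away.exists_of_eq (S := A) (x := dg) h0g
      obtain ⟨n2, hn2⟩ := IsLocalization.Away.exists_of_eq (S := B) (x := dh) h0h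
      have hn1' : g ∣ (h * derivative g) ^ n1 * (p1' - p2') := by
        rw [← AdjoinRoot.mk_eq_zero, map_mul, map_pow, hdg', map_sub, mul_sub, hn1, sub_self]
      have hn2' : h ∣ (g * derivative h) ^ n2 * (p1' - p2') := by
        rw [← AdjoinRoot.mk_eq_zero, map_mul, map_pow, hdh', map_sub, mul_sub, hn2, sub_self]
      have hdvd : g * h ∣ ((h * derivative g) + (g * derivative h)) ^ (n1 + n2 + 1)
          * (p1' - p2') :=
        dvd_add_pow_mul (dvd_mul_right h _) (dvd_mul_right g _) hn1' hn2'
      have hder : (h * derivative g) + (g * derivative h) = derivative (g * h) := by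
        rw [derivative_mul]; ring
      rw [hder] at hdvd
      refine ⟨n1 + n2 + 1, ?_⟩
      have hz : AdjoinRoot.mk (g * h) ((derivative (g * h)) ^ (n1 + n2 + 1) * (p1' - p2'))
          = 0 := AdjoinRoot.mk_eq_zero.mpr hdvd
      rw [map_mul, map_pow, map_sub, mul_sub, sub_eq_zero, ← ha'] at hz
      exact hz
  exact ⟨(IsLocalization.algEquiv (Submonoid.powers a)
    (Localization.Away a) (A × B)).restrictScalars R⟩
end

section
/- In a commutative ring $R$, if $ab = 0$ and $R$ is normal, then $b \in (a + b)$; moreover, writing $b = (a+b)u$, one has $ua = 0$ and $(1-u)b = 0$. -/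
theorem normal_ab_zero {R : Type*} [CommRing R] (hR : IsNormalRing R)
    (a b : R) (hab : a * b = 0) :
    b ∈ Ideal.span ({a + b} : Set R) ∧
      ∃ u : R, b = (a + b) * u ∧ u * a = 0 ∧ (1 - u) * b = 0 := by
  have hb : b ∈ Ideal.span ({a + b} : Set R) := by
    apply hR b (a + b)
    refine ⟨2, by norm_num, fun i => if i = 0 then -1 else 0, ?_⟩
    simp only [Finset.sum_range_succ, Finset.sum_range_zero]
    norm_num
    linear_combination -hab
  have hred : ∀ x : R, x * x = 0 → x = 0 := by
    intro x hx
    have hx0 : x ∈ Ideal.span ({(0 : R)} : Set R) := by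
      apply hR x 0
      exact ⟨2, by norm_num, 0, by simp [Finset.sum_range_succ, pow_two, hx]⟩
    simpa [Ideal.span_singleton_eq_bot.mpr rfl] using hx0
  obtain ⟨u, hu⟩ := Ideal.mem_span_singleton'.mp hb
  have hbu : b = (a + b) * u := by linear_combination -hu
  have h1 : a * a * u = 0 := by linear_combination (1 - u) * hab - a * hbu
  have hua : u * a = 0 := hred _ (by linear_combination u * h1)
  exact ⟨hb, u, hbu, hua, by linear_combination hbu + hua⟩
end
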